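/- arXiv:2305.03939 — 2 statements merged into one kernel-verified Lean document; each statement's English description precedes it below -/
import Mathlib

section
/- (Theorem 1, coefficient characterization) Let T ⊆ {1, …, N} be nonempty and let u : ℝ^N → ℝ be an ANOVA component function for T, i.e. u is Borel measurable, square-integrable with respect to μ, depends only on the coordinates in T (u(ξ) = u(ξ') whenever ξ_t = ξ'_t for all t ∈ T), and has zero partial mean in every coordinate t ∈ T (for μ-a.e. ξ, ∫_ℝ u(ξ_1, …, ξ_{t-1}, s, ξ_{t+1}, …, ξ_N) dμ_t(s) = 0). Then for every multi-index i ∈ ℕ^N that does not belong to M_T, the Fourier coefficient of u against Φ_i vanishes: ∫_{ℝ^N} u(ξ) Φ_i(ξ) dμ(ξ) = 0. -/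
/-!
Integrate out a single coordinate `t` by Fubini. If `i ∉ M_T`, either some `t ∈ T` has
`i t = 0`, so `Φ_i` does not depend on `ξ t` while `u` has zero mean in `ξ t`; or some `t ∉ T`
has `i t ≠ 0`, so `u` does not depend on `ξ t` while `Φ_i` has zero mean in `ξ t`, since
`φ_{i t}` is orthogonal to `φ_0 = 1`. Either way the inner integral vanishes.
-/

open MeasureTheory Function

section UpdateCoordinate

variable {ι : Type*} [Fintype ι] [DecidableEq ι] {α : ι → Type*} [∀ k, MeasurableSpace (α k)]
  (μ : ∀ k, Measure (α k)) [∀ k, SigmaFinite (μ k)] (t : ι) [IsProbabilityMeasure (μ t)]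

theorem measurePreserving_update_prod :
    MeasurePreserving (fun p : (∀ k, α k) × α t ↦ update p.1 t p.2)
      ((Measure.pi μ).prod (μ t)) (Measure.pi μ) := by
  refine ⟨measurable_update', (Measure.pi_eq fun s hs ↦ ?_).symm⟩
  have hpre : (fun p : (∀ k, α k) × α t ↦ update p.1 t p.2) ⁻¹' Set.univ.pi s
      = Set.univ.pi (update s t Set.univ) ×ˢ s t := by
    ext ⟨ξ, y⟩
    simp only [Set.mem_preimage, Set.mem_univ_pi, Set.mem_prod,
      forall_update_iff _ fun k (x : α k) ↦ x ∈ s k,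
      forall_update_iff _ fun k (r : Set (α k)) ↦ ξ k ∈ r, Set.mem_univ, true_and]
    exact and_comm
  rw [Measure.map_apply measurable_update' (.univ_pi hs), hpre, Measure.prod_prod,
    Measure.pi_pi, Finset.prod_congr rfl fun k _ ↦ apply_update (fun k ↦ ⇑(μ k)) s t .univ k,
    measure_univ, Finset.prod_update_of_mem (Finset.mem_univ t), one_mul,
    Finset.sdiff_singleton_eq_erase, Finset.prod_erase_mul _ _ (Finset.mem_univ t)]

variable {E : Type*} [NormedAddCommGroup E] [NormedSpace ℝ E]

theorem integral_integral_update {f : (∀ k, α k) → E} (hf : Integrable f (Measure.pi μ)) :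
    ∫ ξ, ∫ s, f (update ξ t s) ∂μ t ∂Measure.pi μ = ∫ ξ, f ξ ∂Measure.pi μ := by
  have hmp := measurePreserving_update_prod μ t
  have hf' : AEStronglyMeasurable f
      (((Measure.pi μ).prod (μ t)).map fun p ↦ update p.1 t p.2) := by
    rw [hmp.map_eq]; exact hf.1
  rw [← integral_prod (fun p ↦ f (update p.1 t p.2)) (hmp.integrable_comp_of_integrable hf),
    ← integral_map hmp.aemeasurable hf', hmp.map_eq]

theorem integral_mul_eq_zero_of_integral_update_eq_zero {f g : (∀ k, α k) → ℝ}
    (hfg : Integrable (fun ξ ↦ f ξ * g ξ) (Measure.pi μ))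
    (hf : ∀ᵐ ξ ∂Measure.pi μ, ∫ s, f (update ξ t s) ∂μ t = 0)
    (hg : ∀ ξ s, g (update ξ t s) = g ξ) :
    ∫ ξ, f ξ * g ξ ∂Measure.pi μ = 0 := by
  rw [← integral_integral_update μ t hfg]
  refine integral_eq_zero_of_ae ?_
  filter_upwards [hf] with ξ hξ
  simp_rw [hg, integral_mul_const, hξ, zero_mul, Pi.zero_apply]

end UpdateCoordinate

section ProductFunctions

variable {ι : Type*} [Fintype ι] {α : ι → Type*}

theorem memLp_two_prod [∀ k, MeasurableSpace (α k)] {μ : ∀ k, Measure (α k)}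
    [∀ k, SigmaFinite (μ k)] {φ : ∀ k, α k → ℝ} (hmeas : ∀ k, Measurable (φ k))
    (hφ : ∀ k, MemLp (φ k) 2 (μ k)) :
    MemLp (fun ξ ↦ ∏ k, φ k (ξ k)) 2 (Measure.pi μ) := by
  have hprod : Measurable fun ξ : ∀ k, α k ↦ ∏ k, φ k (ξ k) :=
    Finset.measurable_prod _ fun k _ ↦ (hmeas k).comp (measurable_pi_apply k)
  rw [memLp_two_iff_integrable_sq hprod.aestronglyMeasurable]
  simp_rw [← Finset.prod_pow]
  exact .fintype_prod_dep fun k ↦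
    (memLp_two_iff_integrable_sq (hmeas k).aestronglyMeasurable).1 (hφ k)

variable [DecidableEq ι]

theorem prod_apply_update {M : Type*} [CommMonoid M] (φ : ∀ k, α k → M) (ξ : ∀ k, α k) (t : ι)
    (s : α t) : ∏ k, φ k (update ξ t s k) = φ t s * ∏ k ∈ Finset.univ.erase t, φ k (ξ k) := by
  rw [Finset.prod_congr rfl fun k _ ↦ apply_update φ ξ t s k,
    Finset.prod_update_of_mem (Finset.mem_univ t), Finset.sdiff_singleton_eq_erase]

theorem prod_apply_update_of_const {M : Type*} [CommMonoid M] {φ : ∀ k, α k → M} {t : ι}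
    (hconst : ∀ s s', φ t s = φ t s') (ξ : ∀ k, α k) (s : α t) :
    ∏ k, φ k (update ξ t s k) = ∏ k, φ k (ξ k) := by
  simp_rw [apply_update φ ξ t s, hconst s (ξ t), update_eq_self]

variable [∀ k, MeasurableSpace (α k)]

theorem integral_prod_apply_update_eq_zero {t : ι} (ν : Measure (α t)) {φ : ∀ k, α k → ℝ}
    (hmean : ∫ s, φ t s ∂ν = 0) (ξ : ∀ k, α k) :
    ∫ s, ∏ k, φ k (update ξ t s k) ∂ν = 0 := by
  simp_rw [prod_apply_update, integral_mul_const, hmean, zero_mul]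

end ProductFunctions

theorem memLp_two_of_integral_mul_self_ne_zero {X : Type*} [MeasurableSpace X] {μ : Measure X}
    {f : X → ℝ} (hf : AEStronglyMeasurable f μ) (h : ∫ x, f x * f x ∂μ ≠ 0) : MemLp f 2 μ :=
  (memLp_two_iff_integrable_sq hf).2 (by simpa only [sq] using Integrable.of_integral_ne_zero h)

theorem anova_component_fourier_coefficients_supported_on_MT_general
    (N : ℕ) (μk : Fin N → Measure ℝ) [∀ k, IsProbabilityMeasure (μk k)]
    (φ : Fin N → ℕ → ℝ → ℝ)
    (hmeas : ∀ k n, Measurable (φ k n))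
    (horth : ∀ k m n, ∫ x, φ k m x * φ k n x ∂(μk k) = if m = n then 1 else 0)
    (hone : ∀ k, φ k 0 = fun _ => 1)
    (T : Set (Fin N))
    (u : (Fin N → ℝ) → ℝ)
    (hu2 : MemLp u 2 (Measure.pi μk))
    (hdep : ∀ ξ ξ' : Fin N → ℝ, (∀ t ∈ T, ξ t = ξ' t) → u ξ = u ξ')
    (hzero : ∀ t ∈ T, ∀ᵐ ξ ∂(Measure.pi μk),
      ∫ s, u (Function.update ξ t s) ∂(μk t) = 0)
    (i : Fin N → ℕ)
    (hi : i ∉ {i : Fin N → ℕ | (∀ t ∈ T, i t ≠ 0) ∧ ∀ t ∉ T, i t = 0}) :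
    ∫ ξ : Fin N → ℝ, u ξ * ∏ k, φ k (i k) (ξ k) ∂(Measure.pi μk) = 0 := by
  have hΦ : MemLp (fun ξ ↦ ∏ k, φ k (i k) (ξ k)) 2 (Measure.pi μk) :=
    memLp_two_prod (fun k ↦ hmeas k (i k)) fun k ↦ memLp_two_of_integral_mul_self_ne_zero
      (hmeas k (i k)).aestronglyMeasurable (by simp [horth])
  have hint : Integrable (fun ξ ↦ u ξ * ∏ k, φ k (i k) (ξ k)) (Measure.pi μk) :=
    hu2.integrable_mul hΦ
  obtain ⟨t, htT, hit⟩ | ⟨t, htT, hit⟩ : (∃ t ∈ T, i t = 0) ∨ ∃ t ∉ T, i t ≠ 0 := by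
    simpa only [Set.mem_ofPred_eq, not_and_or, not_forall, not_not, exists_prop] using hi
  · exact integral_mul_eq_zero_of_integral_update_eq_zero μk t hint (hzero t htT)
      (prod_apply_update_of_const (φ := fun k ↦ φ k (i k)) (by simp [hit, hone]))
  · have hmean : ∫ s, φ t (i t) s ∂μk t = 0 := by simpa [hone, hit] using horth t (i t) 0
    simp_rw [mul_comm (u _)] at hint ⊢
    exact integral_mul_eq_zero_of_integral_update_eq_zero μk t hint
      (.of_forall (integral_prod_apply_update_eq_zero _ hmean))
      fun ξ s ↦ hdep _ _ fun r hr ↦ update_of_ne (ne_of_mem_of_not_mem hr htT) _ _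

/-- Theorem 1, coefficient characterization: If `u` is an ANOVA
component function for a nonempty `T ⊆ {1,…,N}` (square-integrable, depending only
on the coordinates in `T`, with zero partial mean in every coordinate `t ∈ T`),
then for every multi-index `i ∉ M_T` the Fourier coefficient `∫ u Φ_i dμ`
vanishes, where `M_T = {i : i_t ≠ 0 for t ∈ T, i_t = 0 for t ∉ T}`. -/
theorem anova_component_fourier_coefficients_supported_on_MT
    (N : ℕ) (μk : Fin N → Measure ℝ) [∀ k, IsProbabilityMeasure (μk k)]
    (φ : Fin N → ℕ → ℝ → ℝ)
    (hmeas : ∀ k n, Measurable (φ k n))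
    (horth : ∀ k m n, ∫ x, φ k m x * φ k n x ∂(μk k) = if m = n then 1 else 0)
    (hone : ∀ k, φ k 0 = fun _ => 1)
    (T : Set (Fin N)) (hT : T.Nonempty)
    (u : (Fin N → ℝ) → ℝ) (humeas : Measurable u)
    (hu2 : MemLp u 2 (Measure.pi μk))
    (hdep : ∀ ξ ξ' : Fin N → ℝ, (∀ t ∈ T, ξ t = ξ' t) → u ξ = u ξ')
    (hzero : ∀ t ∈ T, ∀ᵐ ξ ∂(Measure.pi μk),
      ∫ s, u (Function.update ξ t s) ∂(μk t) = 0)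
    (i : Fin N → ℕ)
    (hi : i ∉ {i : Fin N → ℕ | (∀ t ∈ T, i t ≠ 0) ∧ ∀ t ∉ T, i t = 0}) :
    ∫ ξ : Fin N → ℝ, u ξ * ∏ k, φ k (i k) (ξ k) ∂(Measure.pi μk) = 0 :=
  anova_component_fourier_coefficients_supported_on_MT_general N μk φ hmeas horth hone T u hu2 hdep
    hzero i hi
end

section
/- (Orthogonality of ANOVA component functions) Let T, S ⊆ {1, …, N} be nonempty subsets with T ≠ S. Let u, v : ℝ^N → ℝ be Borel measurable and square-integrable with respect to μ, where u depends only on the coordinates in T (u(ξ) = u(ξ') whenever ξ_t = ξ'_t for all t ∈ T) and has zero partial mean in every coordinate t ∈ T (for μ-a.e. ξ, ∫_ℝ u(ξ_1, …, ξ_{t-1}, s, ξ_{t+1}, …, ξ_N) dμ_t(s) = 0), and likewise v depends only on the coordinates in S and has zero partial mean in every coordinate t ∈ S. Then u and v are orthogonal in L²(μ): ∫_{ℝ^N} u(ξ) v(ξ) dμ(ξ) = 0. -/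
open MeasureTheory Function Set

/-!
Resampling one coordinate `t` independently from `μ t` leaves a product measure invariant, so
`∫ u v = ∫ (∫ u(ξ[t ↦ s]) dμ_t(s)) v(ξ) dμ(ξ)` whenever `v` does not depend on the coordinate `t`,
and the inner integral vanishes when `u` has zero partial mean in `t`. Since `T ≠ S`, there is
a coordinate in one of the two sets but not the other, and this applies to it.
-/

lemma DependsOn.update_of_notMem {ι β : Type*} [DecidableEq ι] {α : ι → Type*}
    {f : (∀ i, α i) → β} {s : Set ι} (hf : DependsOn f s) {i : ι} (hi : i ∉ s)
    (x : ∀ i, α i) (y : α i) : f (Function.update x i y) = f x :=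
  hf fun _ hj => update_of_ne (ne_of_mem_of_not_mem hj hi) _ _

namespace MeasureTheory.Measure

variable {ι : Type*} [Fintype ι] [DecidableEq ι] {X : ι → Type*} [∀ i, MeasurableSpace (X i)]
  (μ : ∀ i, Measure (X i)) [∀ i, SigmaFinite (μ i)] (i : ι) [IsProbabilityMeasure (μ i)]

theorem map_update_prod_pi :
    ((Measure.pi μ).prod (μ i)).map (fun p => update p.1 i p.2) = Measure.pi μ := by
  refine (pi_eq fun s hs => ?_).symm
  have hpre : (fun p : (∀ j, X j) × X i => update p.1 i p.2) ⁻¹' univ.pi s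
      = univ.pi (update s i univ) ×ˢ s i := by
    ext ⟨x, y⟩
    simp only [mem_preimage, mem_univ_pi, mem_prod]
    refine ⟨fun h => ⟨fun j => ?_, by simpa using h i⟩, fun ⟨hx, hy⟩ j => ?_⟩
    · rcases eq_or_ne j i with rfl | hj
      · simp
      · simpa [hj] using h j
    · rcases eq_or_ne j i with rfl | hj
      · simpa using hy
      · simpa [hj] using hx j
  rw [map_apply measurable_update' (MeasurableSet.univ_pi hs), hpre, prod_prod, pi_pi,
    ← Finset.prod_erase_mul _ _ (Finset.mem_univ i), ← Finset.prod_erase_mul _ _ (Finset.mem_univ i)]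
  simp only [update_self, measure_univ, mul_one]
  congr 1
  refine Finset.prod_congr rfl fun j hj => ?_
  rw [update_of_ne (Finset.ne_of_mem_erase hj)]

theorem integral_pi_eq_integral_integral_update {E : Type*} [NormedAddCommGroup E]
    [NormedSpace ℝ E] {f : (∀ j, X j) → E} (hf : Integrable f (Measure.pi μ)) :
    ∫ x, f x ∂Measure.pi μ = ∫ x, ∫ y, f (update x i y) ∂μ i ∂Measure.pi μ := by
  rw [← map_update_prod_pi μ i] at hf
  conv_lhs => rw [← map_update_prod_pi μ i]
  rw [integral_map measurable_update'.aemeasurable hf.aestronglyMeasurable]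
  exact integral_prod _ (hf.comp_measurable measurable_update')

theorem integral_mul_eq_zero_of_integral_update_eq_zero {f g : (∀ j, X j) → ℝ}
    (hfg : Integrable (fun x => f x * g x) (Measure.pi μ)) (hg : ∀ x y, g (update x i y) = g x)
    (hf : ∀ᵐ x ∂Measure.pi μ, ∫ y, f (update x i y) ∂μ i = 0) :
    ∫ x, f x * g x ∂Measure.pi μ = 0 := by
  rw [integral_pi_eq_integral_integral_update μ i hfg]
  refine integral_eq_zero_of_ae (hf.mono fun x hx => ?_)
  simp only [hg, integral_mul_const, hx, zero_mul, Pi.zero_apply]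

end MeasureTheory.Measure

theorem anova_components_orthogonal_general
    (N : ℕ) (μk : Fin N → Measure ℝ) [∀ k, IsProbabilityMeasure (μk k)]
    (T S : Set (Fin N)) (hTS : T ≠ S)
    (u v : (Fin N → ℝ) → ℝ)
    (hu2 : MemLp u 2 (Measure.pi μk)) (hv2 : MemLp v 2 (Measure.pi μk))
    (hudep : ∀ ξ ξ' : Fin N → ℝ, (∀ t ∈ T, ξ t = ξ' t) → u ξ = u ξ')
    (huzero : ∀ t ∈ T, ∀ᵐ ξ ∂(Measure.pi μk),
      ∫ s, u (Function.update ξ t s) ∂(μk t) = 0)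
    (hvdep : ∀ ξ ξ' : Fin N → ℝ, (∀ t ∈ S, ξ t = ξ' t) → v ξ = v ξ')
    (hvzero : ∀ t ∈ S, ∀ᵐ ξ ∂(Measure.pi μk),
      ∫ s, v (Function.update ξ t s) ∂(μk t) = 0) :
    ∫ ξ : Fin N → ℝ, u ξ * v ξ ∂(Measure.pi μk) = 0 := by
  obtain ⟨t, htT, htS⟩ | ⟨t, htS, htT⟩ : (∃ t ∈ T, t ∉ S) ∨ (∃ t ∈ S, t ∉ T) := by
    by_contra! h
    exact hTS (Set.ext fun t => ⟨h.1 t, h.2 t⟩)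
  · exact Measure.integral_mul_eq_zero_of_integral_update_eq_zero μk t (hu2.integrable_mul hv2)
      (DependsOn.update_of_notMem hvdep htS) (huzero t htT)
  · simp_rw [mul_comm (u _)]
    exact Measure.integral_mul_eq_zero_of_integral_update_eq_zero μk t (hv2.integrable_mul hu2)
      (DependsOn.update_of_notMem hudep htT) (hvzero t htS)

/-- Orthogonality of ANOVA component functions: If `T ≠ S` are
nonempty subsets of `{1,…,N}`, `u` is an ANOVA component function for `T` and
`v` is an ANOVA component function for `S`, then `∫ u v dμ = 0`. -/
theorem anova_components_orthogonal
    (N : ℕ) (μk : Fin N → Measure ℝ) [∀ k, IsProbabilityMeasure (μk k)]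
    (T S : Set (Fin N)) (hT : T.Nonempty) (hS : S.Nonempty) (hTS : T ≠ S)
    (u v : (Fin N → ℝ) → ℝ)
    (humeas : Measurable u) (hvmeas : Measurable v)
    (hu2 : MemLp u 2 (Measure.pi μk)) (hv2 : MemLp v 2 (Measure.pi μk))
    (hudep : ∀ ξ ξ' : Fin N → ℝ, (∀ t ∈ T, ξ t = ξ' t) → u ξ = u ξ')
    (huzero : ∀ t ∈ T, ∀ᵐ ξ ∂(Measure.pi μk),
      ∫ s, u (Function.update ξ t s) ∂(μk t) = 0)
    (hvdep : ∀ ξ ξ' : Fin N → ℝ, (∀ t ∈ S, ξ t = ξ' t) → v ξ = v ξ')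
    (hvzero : ∀ t ∈ S, ∀ᵐ ξ ∂(Measure.pi μk),
      ∫ s, v (Function.update ξ t s) ∂(μk t) = 0) :
    ∫ ξ : Fin N → ℝ, u ξ * v ξ ∂(Measure.pi μk) = 0 :=
  anova_components_orthogonal_general N μk T S hTS u v hu2 hv2 hudep huzero hvdep hvzero
end
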